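/- arXiv:math/0009251 — 6 statements merged into one kernel-verified Lean document; each statement's English description precedes it below -/
import Mathlib

section
/- Let G : [0,∞) → [0,∞) be concave, increasing, not identically 0, with G(0) = 0, satisfying G(x+y) ≤ G(x)+G(y), G(x+y)² ≥ G(x)² + G(y)², and G(x²) = G(x)² for all x, y ≥ 0. Let a, b, c > 0 be the sides of a Euclidean triangle with angle γ opposite c, so c² = a² + b² - 2ab cos γ. Then the numbers G(a), G(b), G(c) satisfy the strict triangle inequality and the angle γ̃ opposite G(c) in the Euclidean triangle with sides G(a), G(b), G(c) satisfies γ̃ > γ/2. -/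
/-!
Concavity makes `G x / x` nonincreasing, and the tensor power trick applied to the superadditive,
square-multiplicative function `G²` makes `G x ^ 2 / x` nondecreasing, so `G` sits between the
extremal cases `G x = √x` and `G x = x`. The strict triangle inequalities follow from
subadditivity and strict monotonicity. For the angle, take `b ≤ a`: then `r = a G(b) / G(a)` lies in
`[b, √(ab)]`, and `G(c) ≥ c G(a) / a` if `c ≤ a`, `G(c) ≥ √(c / a) G(a)` if `a ≤ c`. With
`s = cos(γ/2)` the claim reduces to `a² + r² - 2 a r s < c²` (resp. `< a c`) for such `r`: a
convex quadratic in `r`, checked at both endpoints (resp. divided by `r` an increasing function,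
checked at `√(ab)`).
-/

open Real Set

lemma ConcaveOn.mul_apply_le_mul_apply {G : ℝ → ℝ} (hG : ConcaveOn ℝ (Ici 0) G) (hG0 : 0 ≤ G 0)
    {u v : ℝ} (hu : 0 ≤ u) (huv : u ≤ v) : u * G v ≤ v * G u := by
  rcases (hu.trans huv).eq_or_lt with hv | hv
  · obtain rfl : u = 0 := le_antisymm (hv ▸ huv) hu
    simp [← hv]
  have hconv := hG.2 (mem_Ici.2 hv.le) (mem_Ici.2 le_rfl) (div_nonneg hu hv.le)
    (sub_nonneg.2 ((div_le_one hv).2 huv)) (add_sub_cancel _ _)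
  simp only [smul_eq_mul, mul_zero, add_zero, div_mul_cancel₀ u hv.ne'] at hconv
  have := mul_nonneg (sub_nonneg.2 ((div_le_one hv).2 huv)) hG0
  calc u * G v = v * (u / v * G v) := by field_simp
    _ ≤ v * G u := mul_le_mul_of_nonneg_left (by linarith) hv.le

lemma le_max_of_forall_pow_two_pow_le_add {p q r : ℝ} (hp : 0 ≤ p) (hq : 0 ≤ q)
    (h : ∀ k : ℕ, r ^ 2 ^ k ≤ p ^ 2 ^ k + q ^ 2 ^ k) : r ≤ max p q := by
  by_contra! hlt
  set M := max p q
  have hM : 0 ≤ M := hp.trans (le_max_left p q)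
  have hr : 0 < r := hM.trans_lt hlt
  have hMr : M / r < 1 := (div_lt_one hr).2 hlt
  obtain ⟨k, hk⟩ := exists_pow_lt_of_lt_one one_half_pos hMr
  have hsmall : (M / r) ^ 2 ^ k < 1 / 2 :=
    (pow_le_pow_of_le_one (by positivity) hMr.le Nat.lt_two_pow_self.le).trans_lt hk
  have hlarge : r ^ 2 ^ k ≤ 2 * M ^ 2 ^ k := by
    have := pow_le_pow_left₀ hp (le_max_left p q) (2 ^ k)
    have := pow_le_pow_left₀ hq (le_max_right p q) (2 ^ k)
    linarith [h k]
  rw [div_pow, div_lt_iff₀ (by positivity)] at hsmall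
  linarith

section Superadditive

variable {F : ℝ → ℝ} (hF : ∀ x, 0 ≤ x → 0 ≤ F x)
  (hadd : ∀ x y, 0 ≤ x → 0 ≤ y → F x + F y ≤ F (x + y))
include hF hadd

lemma monotoneOn_of_superadditive : MonotoneOn F (Ici 0) := fun u hu v _ huv => by
  have := hadd u (v - u) hu (sub_nonneg.2 huv)
  rw [add_sub_cancel] at this
  linarith [hF (v - u) (sub_nonneg.2 huv)]

lemma natCast_mul_le_of_superadditive (n : ℕ) {x : ℝ} (hx : 0 ≤ x) : n * F x ≤ F (n * x) := by
  induction n with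
  | zero => simpa using hF 0 le_rfl
  | succ n ih =>
    have := hadd (n * x) x (by positivity) hx
    push_cast
    rw [add_mul, one_mul, add_mul, one_mul]
    linarith

omit hF hadd in
lemma map_pow_two_pow_of_map_sq (hsq : ∀ x, 0 ≤ x → F (x ^ 2) = F x ^ 2) (k : ℕ) {x : ℝ}
    (hx : 0 ≤ x) : F (x ^ 2 ^ k) = F x ^ 2 ^ k := by
  induction k with
  | zero => simp
  | succ k ih => rw [pow_succ, pow_mul, hsq _ (by positivity), ih, ← pow_mul]

/-- The tensor power trick: `F (v ^ N) ≥ ⌊(v / u) ^ N⌋ F (u ^ N)` for `N = 2 ^ k`. -/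
lemma mul_le_mul_of_superadditive_of_map_sq (hsq : ∀ x, 0 ≤ x → F (x ^ 2) = F x ^ 2)
    {u v : ℝ} (hu : 0 < u) (huv : u ≤ v) : v * F u ≤ u * F v := by
  have hv : 0 < v := hu.trans_le huv
  have hmono := monotoneOn_of_superadditive hF hadd
  have hFuv : u * F u ≤ u * F v :=
    mul_le_mul_of_nonneg_left (hmono (mem_Ici.2 hu.le) (mem_Ici.2 hv.le) huv) hu.le
  refine max_eq_left hFuv ▸ le_max_of_forall_pow_two_pow_le_add
    (mul_nonneg hu.le (hF v hv.le)) (mul_nonneg hu.le (hF u hu.le)) fun k => ?_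
  set N := 2 ^ k
  set n := ⌊(v / u) ^ N⌋₊
  have huN : 0 < u ^ N := by positivity
  have hn : n * u ^ N ≤ v ^ N := by
    rw [← le_div_iff₀ huN, ← div_pow]
    exact Nat.floor_le (by positivity)
  have hn' : v ^ N ≤ (n + 1) * u ^ N := by
    rw [← div_le_iff₀ huN, ← div_pow]
    exact (Nat.lt_floor_add_one _).le
  have hFn : n * F u ^ N ≤ F v ^ N := by
    rw [← map_pow_two_pow_of_map_sq hsq k hu.le, ← map_pow_two_pow_of_map_sq hsq k hv.le]
    exact (natCast_mul_le_of_superadditive hF hadd n huN.le).trans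
      (hmono (mem_Ici.2 (by positivity)) (mem_Ici.2 (by positivity)) hn)
  have hFuN : 0 ≤ F u ^ N := pow_nonneg (hF u hu.le) N
  calc (v * F u) ^ N = v ^ N * F u ^ N := mul_pow _ _ _
    _ ≤ (n + 1) * u ^ N * F u ^ N := mul_le_mul_of_nonneg_right hn' hFuN
    _ = u ^ N * (n * F u ^ N) + (u * F u) ^ N := by ring
    _ ≤ u ^ N * F v ^ N + (u * F u) ^ N := by gcongr
    _ = (u * F v) ^ N + (u * F u) ^ N := by ring

end Superadditive

lemma quadratic_neg_of_mem_Icc {p q x₁ x₂ x : ℝ} (h₁ : x₁ ≤ x) (h₂ : x ≤ x₂)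
    (hf₁ : x₁ ^ 2 + p * x₁ + q < 0) (hf₂ : x₂ ^ 2 + p * x₂ + q < 0) : x ^ 2 + p * x + q < 0 := by
  rcases le_total (x + x₁ + p) 0 with h | h
  · nlinarith [mul_nonpos_of_nonneg_of_nonpos (sub_nonneg.2 h₁) h]
  · nlinarith [mul_nonpos_of_nonpos_of_nonneg (sub_nonpos.2 h₂)
      (h.trans (by linarith : x + x₁ + p ≤ x + x₂ + p))]

section HalfAngle

variable {a b c s : ℝ} (ha : 0 < a) (hb : 0 < b) (hs : 0 < s) (hs1 : s < 1)
  (hlaw : c ^ 2 = (a + b) ^ 2 - 4 * a * b * s ^ 2)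
include ha hb hs hs1 hlaw

lemma sq_add_mul_sub_lt_sq : a ^ 2 + a * b - 2 * a * √(a * b) * s < c ^ 2 := by
  set m := √(a * b)
  have hm : m ^ 2 = a * b := sq_sqrt (by positivity)
  have hm0 : 0 ≤ m := sqrt_nonneg _
  -- as a function of `s` the left side is concave, positive at `s = 0` and nonnegative at `s = 1`
  have key : b * (c ^ 2 - (a ^ 2 + a * b - 2 * a * m * s)) =
      (1 - s) * (m ^ 2 * b + b ^ 3) + s * ((m - b) ^ 2 * (2 * m + b)) +
        4 * m ^ 2 * b * (s * (1 - s)) := by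
    linear_combination b * hlaw - (b - 4 * b * s ^ 2 + 2 * m * s) * hm
  have : 0 < b * (c ^ 2 - (a ^ 2 + a * b - 2 * a * m * s)) := by
    rw [key]
    have := sub_pos.2 hs1
    positivity
  linarith [pos_of_mul_pos_right this hb.le]

lemma sq_add_sq_sub_mul_lt_sq {r : ℝ} (hbr : b ≤ r) (hrm : r ≤ √(a * b)) :
    a ^ 2 + r ^ 2 - 2 * a * r * s < c ^ 2 := by
  have hm : √(a * b) ^ 2 = a * b := sq_sqrt (by positivity)
  have hb_end : b ^ 2 + -2 * a * s * b + (a ^ 2 - c ^ 2) < 0 := by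
    rw [hlaw]
    nlinarith [mul_pos (mul_pos ha hb) (mul_pos (by linarith : 0 < 2 * s + 1) (sub_pos.2 hs1))]
  have hm_end : √(a * b) ^ 2 + -2 * a * s * √(a * b) + (a ^ 2 - c ^ 2) < 0 := by
    linarith [sq_add_mul_sub_lt_sq ha hb hs hs1 hlaw]
  linarith [quadratic_neg_of_mem_Icc hbr hrm hb_end hm_end]

lemma sq_add_sq_sub_mul_lt_mul (hac : a ≤ c) {r : ℝ} (hr : 0 < r) (hrm : r ≤ √(a * b)) :
    a ^ 2 + r ^ 2 - 2 * a * r * s < a * c := by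
  set m := √(a * b)
  have hm : m ^ 2 = a * b := sq_sqrt (by positivity)
  have hm0 : 0 < m := sqrt_pos.2 (by positivity)
  have hamgm : 2 * m ≤ a + b := by nlinarith [sq_nonneg (a - b)]
  have hm_end : a + b - 2 * m * s < c := by
    have hd : 0 < a + b - 2 * m * s := by nlinarith
    refine lt_of_pow_lt_pow_left₀ 2 (ha.le.trans hac) ?_
    nlinarith [mul_pos (mul_pos hm0 hs) hd]
  -- `(a² + r² - 2ars - ac) / r` is increasing in `r` since `a² - ac ≤ 0`
  have hmono : m * (a ^ 2 + r ^ 2 - 2 * a * r * s - a * c) ≤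
      r * (a ^ 2 + m ^ 2 - 2 * a * m * s - a * c) := by
    nlinarith [mul_nonneg (sub_nonneg.2 hrm)
      (add_nonneg (mul_pos hr hm0).le (mul_nonneg ha.le (sub_nonneg.2 hac)))]
  have : r * (a ^ 2 + m ^ 2 - 2 * a * m * s - a * c) < 0 :=
    mul_neg_of_pos_of_neg hr (by nlinarith)
  nlinarith

end HalfAngle

section Distortion

variable {G : ℝ → ℝ} (hG : ∀ x, 0 ≤ x → 0 ≤ G x)
  (hsup : ∀ x y, 0 ≤ x → 0 ≤ y → G x ^ 2 + G y ^ 2 ≤ G (x + y) ^ 2)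
include hG hsup

omit hG in
lemma mul_sq_le_mul_sq_of_superadditive_sq (hsq : ∀ x, 0 ≤ x → G (x ^ 2) = G x ^ 2)
    {u v : ℝ} (hu : 0 < u) (huv : u ≤ v) : v * G u ^ 2 ≤ u * G v ^ 2 :=
  mul_le_mul_of_superadditive_of_map_sq (F := fun x => G x ^ 2) (fun _ _ => sq_nonneg _) hsup
    (fun x hx => by rw [hsq x hx, ← pow_mul]) hu huv

lemma pos_of_superadditive_sq (hconc : ConcaveOn ℝ (Ici 0) G) (hne : ∃ x ∈ Ici (0 : ℝ), G x ≠ 0)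
    {x : ℝ} (hx : 0 < x) : 0 < G x := by
  obtain ⟨x₀, hx₀, hGx₀⟩ := hne
  have hGx₀ : 0 < G x₀ := (hG x₀ hx₀).lt_of_ne' hGx₀
  rcases le_total x₀ x with h | h
  · have := monotoneOn_of_superadditive (F := fun x => G x ^ 2) (fun _ _ => sq_nonneg _) hsup
      hx₀ (mem_Ici.2 hx.le) h
    refine lt_of_pow_lt_pow_left₀ 2 (hG x hx.le) ?_
    rw [zero_pow two_ne_zero]
    exact (pow_pos hGx₀ 2).trans_le this
  · exact pos_of_mul_pos_right ((mul_pos hx hGx₀).trans_le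
      (hconc.mul_apply_le_mul_apply (hG 0 le_rfl) hx.le h)) hx₀

lemma strictMonoOn_of_superadditive_sq (hpos : ∀ x, 0 < x → 0 < G x) : StrictMonoOn G (Ici 0) :=
  fun u hu v hv huv => by
    have := hsup u (v - u) hu (sub_nonneg.2 huv.le)
    rw [add_sub_cancel] at this
    have := hpos (v - u) (sub_pos.2 huv)
    exact lt_of_pow_lt_pow_left₀ 2 (hG v hv) (by nlinarith)

lemma sq_add_sq_sub_sq_lt (hconc : ConcaveOn ℝ (Ici 0) G)
    (hsq : ∀ x, 0 ≤ x → G (x ^ 2) = G x ^ 2)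
    (hpos : ∀ x, 0 < x → 0 < G x) {a b c s : ℝ} (hb : 0 < b) (hc : 0 ≤ c) (hba : b ≤ a)
    (hs : 0 < s) (hs1 : s < 1) (hlaw : c ^ 2 = (a + b) ^ 2 - 4 * a * b * s ^ 2) :
    G a ^ 2 + G b ^ 2 - G c ^ 2 < 2 * G a * G b * s := by
  have ha : 0 < a := hb.trans_le hba
  have hGa := hpos a ha
  have hG0 := hG 0 le_rfl
  set r := a * G b / G a
  have hbr : b ≤ r := (le_div_iff₀ hGa).2 (hconc.mul_apply_le_mul_apply hG0 hb.le hba)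
  have hrm : r ≤ √(a * b) := by
    rw [le_sqrt (hb.le.trans hbr) (by positivity), div_pow, div_le_iff₀ (by positivity)]
    nlinarith [mul_sq_le_mul_sq_of_superadditive_sq hsup hsq hb hba]
  have hscale : G a ^ 2 + G b ^ 2 - 2 * G a * G b * s =
      (G a / a) ^ 2 * (a ^ 2 + r ^ 2 - 2 * a * r * s) := by
    simp only [r]
    field_simp
  suffices (G a / a) ^ 2 * (a ^ 2 + r ^ 2 - 2 * a * r * s) < G c ^ 2 by linarith
  have hGa2 : 0 < (G a / a) ^ 2 := by positivity
  rcases le_total c a with hca | hac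
  · have hGc : c * G a ≤ a * G c := hconc.mul_apply_le_mul_apply hG0 hc hca
    calc (G a / a) ^ 2 * (a ^ 2 + r ^ 2 - 2 * a * r * s)
        < (G a / a) ^ 2 * c ^ 2 :=
          mul_lt_mul_of_pos_left (sq_add_sq_sub_mul_lt_sq ha hb hs hs1 hlaw hbr hrm) hGa2
      _ = (c * G a / a) ^ 2 := by ring
      _ ≤ G c ^ 2 := pow_le_pow_left₀ (by positivity) ((div_le_iff₀' ha).2 hGc) 2
  · have hGc : c * G a ^ 2 ≤ a * G c ^ 2 := mul_sq_le_mul_sq_of_superadditive_sq hsup hsq ha hac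
    calc (G a / a) ^ 2 * (a ^ 2 + r ^ 2 - 2 * a * r * s)
        < (G a / a) ^ 2 * (a * c) := mul_lt_mul_of_pos_left
          (sq_add_sq_sub_mul_lt_mul ha hb hs hs1 hlaw hac (hb.trans_le hbr) hrm) hGa2
      _ = c * G a ^ 2 / a := by field_simp
      _ ≤ G c ^ 2 := (div_le_iff₀' ha).2 hGc

end Distortion

lemma triangle_of_law_of_cosines {a b c t : ℝ} (ha : 0 < a) (hb : 0 < b) (hc : 0 < c)
    (ht₀ : -1 < t) (ht₁ : t < 1) (hlaw : c ^ 2 = a ^ 2 + b ^ 2 - 2 * a * b * t) :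
    c < a + b ∧ a < b + c ∧ b < a + c := by
  have hab := mul_pos ha hb
  refine ⟨?_, ?_, ?_⟩ <;>
    nlinarith [mul_pos hab (sub_pos.2 ht₁), mul_pos hab (neg_lt_iff_pos_add.1 ht₀)]

lemma lt_arccos_of_lt_cos {x y : ℝ} (hx₀ : 0 ≤ x) (hx : x < π) (h : y < cos x) : x < arccos y := by
  rcases lt_or_ge y (-1) with hy | hy
  · rwa [arccos_of_le_neg_one hy.le]
  · simpa [arccos_cos hx₀ hx.le] using arccos_lt_arccos hy h (cos_le_one x)

theorem stmt_4_general (G : ℝ → ℝ)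
    (hGnonneg : ∀ x, 0 ≤ x → 0 ≤ G x)
    (hconc : ConcaveOn ℝ (Set.Ici 0) G)
    (hne : ∃ x ∈ Set.Ici (0 : ℝ), G x ≠ 0)
    (hsub : ∀ x y, 0 ≤ x → 0 ≤ y → G (x + y) ≤ G x + G y)
    (hsup : ∀ x y, 0 ≤ x → 0 ≤ y → G x ^ 2 + G y ^ 2 ≤ G (x + y) ^ 2)
    (hsq : ∀ x, 0 ≤ x → G (x ^ 2) = G x ^ 2)
    (a b c γ : ℝ) (ha : 0 < a) (hb : 0 < b) (hc : 0 < c)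
    (hγ : γ ∈ Set.Ioo 0 Real.pi)
    (hlaw : c ^ 2 = a ^ 2 + b ^ 2 - 2 * a * b * Real.cos γ) :
    G c < G a + G b ∧ G a < G b + G c ∧ G b < G a + G c ∧
      γ / 2 < Real.arccos ((G a ^ 2 + G b ^ 2 - G c ^ 2) / (2 * G a * G b)) := by
  obtain ⟨hγ₀, hγπ⟩ := hγ
  have hpos x (hx : 0 < x) := pos_of_superadditive_sq hGnonneg hsup hconc hne hx
  have hmono := strictMonoOn_of_superadditive_sq hGnonneg hsup hpos
  have hmap_lt {x y z : ℝ} (hx : 0 ≤ x) (hy : 0 ≤ y) (hz : 0 ≤ z) (h : x < y + z) :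
      G x < G y + G z := (hmono hx (add_nonneg hy hz) h).trans_le (hsub y z hy hz)
  set s := cos (γ / 2)
  have hs : 0 < s := cos_pos_of_mem_Ioo ⟨by linarith, by linarith⟩
  have hs1 : s < 1 := cos_zero ▸ cos_lt_cos_of_nonneg_of_le_pi le_rfl (by linarith) (by linarith)
  have hcos : cos γ = 2 * s ^ 2 - 1 := by
    rw [cos_sq, show 2 * (γ / 2) = γ by ring]
    ring
  obtain ⟨hcab, habc, hbac⟩ :=
    triangle_of_law_of_cosines ha hb hc (by nlinarith) (by nlinarith) hlaw
  refine ⟨hmap_lt hc.le ha.le hb.le hcab, hmap_lt ha.le hb.le hc.le habc,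
    hmap_lt hb.le ha.le hc.le hbac, lt_arccos_of_lt_cos (by linarith) (by linarith) ?_⟩
  have hlaw' : c ^ 2 = (a + b) ^ 2 - 4 * a * b * s ^ 2 := by rw [hlaw, hcos]; ring
  rw [div_lt_iff₀ (by have := hpos a ha; have := hpos b hb; positivity)]
  rcases le_total b a with hba | hab
  · linarith [sq_add_sq_sub_sq_lt hGnonneg hsup hconc hsq hpos hb hc.le hba hs hs1 hlaw']
  · linarith [sq_add_sq_sub_sq_lt hGnonneg hsup hconc hsq hpos (c := c) ha hc.le hab hs hs1
      (by rw [hlaw']; ring)]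

/-- Lemma 5.1: for admissible side distortion functions `G`, the transformed triangle
exists and its angle opposite `G(c)` satisfies `γ̃ > γ/2`. -/
theorem stmt_4 (G : ℝ → ℝ)
    (hGnonneg : ∀ x, 0 ≤ x → 0 ≤ G x)
    (hconc : ConcaveOn ℝ (Set.Ici 0) G)
    (hmono : MonotoneOn G (Set.Ici 0))
    (hne : ∃ x ∈ Set.Ici (0 : ℝ), G x ≠ 0)
    (h0 : G 0 = 0)
    (hsub : ∀ x y, 0 ≤ x → 0 ≤ y → G (x + y) ≤ G x + G y)
    (hsup : ∀ x y, 0 ≤ x → 0 ≤ y → G x ^ 2 + G y ^ 2 ≤ G (x + y) ^ 2)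
    (hsq : ∀ x, 0 ≤ x → G (x ^ 2) = G x ^ 2)
    (a b c γ : ℝ) (ha : 0 < a) (hb : 0 < b) (hc : 0 < c)
    (hγ : γ ∈ Set.Ioo 0 Real.pi)
    (hlaw : c ^ 2 = a ^ 2 + b ^ 2 - 2 * a * b * Real.cos γ) :
    G c < G a + G b ∧ G a < G b + G c ∧ G b < G a + G c ∧
      γ / 2 < Real.arccos ((G a ^ 2 + G b ^ 2 - G c ^ 2) / (2 * G a * G b)) :=
  stmt_4_general G hGnonneg hconc hne hsub hsup hsq a b c γ ha hb hc hγ hlaw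
end

section
/- For every Euclidean triangle with angles α ≤ β ≤ γ and sides a ≤ b ≤ c (each angle opposite the corresponding side), the angle γ̃ opposite the side min{c,1} in the Euclidean triangle with sides min{a,1}, min{b,1}, min{c,1} satisfies γ̃ > γ/3. -/
/-- Lemma 7.2 for the largest angle: the truncated sides `min{a,1}, min{b,1}, min{c,1}`
form a triangle whose largest angle `γ̃` satisfies `γ̃ > γ/3`. -/
theorem stmt_7 (a b c : ℝ) (ha : 0 < a) (hab : a ≤ b) (hbc : b ≤ c)
    (htri : c < a + b) :
    min c 1 < min a 1 + min b 1 ∧ min a 1 < min b 1 + min c 1 ∧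
      min b 1 < min a 1 + min c 1 ∧
      Real.arccos ((a ^ 2 + b ^ 2 - c ^ 2) / (2 * a * b)) / 3 <
        Real.arccos (((min a 1) ^ 2 + (min b 1) ^ 2 - (min c 1) ^ 2) /
          (2 * min a 1 * min b 1)) := by
  have hb : 0 < b := ha.trans_le hab
  have hc : 0 < c := hb.trans_le hbc
  have ha1 : 0 < min a 1 := lt_min ha one_pos
  have hb1 : 0 < min b 1 := lt_min hb one_pos
  have hc1 : 0 < min c 1 := lt_min hc one_pos
  have hab1 : min a 1 ≤ min b 1 := min_le_min hab le_rfl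
  have hbc1 : min b 1 ≤ min c 1 := min_le_min hbc le_rfl
  have h1 : min c 1 < min a 1 + min b 1 := by
    rcases le_or_gt 1 a with h | h
    · rw [min_eq_right h]
      have := min_le_right c 1
      linarith
    · rw [min_eq_left h.le]
      rcases le_or_gt 1 b with h' | h'
      · rw [min_eq_right h']
        have := min_le_right c 1
        linarith
      · rw [min_eq_left h'.le]
        have := min_le_left c 1
        linarith
  refine ⟨h1, by linarith, by linarith, ?_⟩
  set X := (a ^ 2 + b ^ 2 - c ^ 2) / (2 * a * b) with hX
  set Y := ((min a 1) ^ 2 + (min b 1) ^ 2 - (min c 1) ^ 2) / (2 * min a 1 * min b 1) with hY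
  have hγ : Real.arccos X < Real.pi := by
    refine lt_of_le_of_ne (Real.arccos_le_pi X) (fun h => ?_)
    rw [Real.arccos_eq_pi] at h
    rw [hX, div_le_iff₀ (by positivity)] at h
    nlinarith
  have hY2 : Y ≤ 1 / 2 := by
    rw [hY, div_le_iff₀ (by positivity)]
    nlinarith
  have hπ3 : Real.pi / 3 ≤ Real.arccos Y := by
    have : Real.arccos (1 / 2) = Real.pi / 3 := by
      rw [← Real.cos_pi_div_three]
      exact Real.arccos_cos (by positivity) (by linarith [Real.pi_pos])
    calc Real.pi / 3 = Real.arccos (1 / 2) := this.symm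
      _ ≤ Real.arccos Y := by
          rw [Real.arccos, Real.arccos]
          have := Real.monotone_arcsin hY2
          linarith
  linarith
end

section
/- For q ∈ (0,1) and R > 0, the conformal metric on D(R)\{0} with density λ(z) = 2q R^q |z|^{q-1}/(R^{2q} - |z|^{2q}) has constant Gaussian curvature -1, i.e., Δ(log λ) = λ² away from the origin. -/
/-!
`λ |dz|` is the pullback of the Poincaré metric `2 |dζ| / (1 - |ζ|²)` by the multivalued map
`ζ = (z/R)^q`, which is why it is hyperbolic; here the curvature is computed directly.
Writing `w = |z|²`, the logarithm of the density is a function `G(w)` of `w` alone, and for such a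
function `Δ (G ∘ |·|²) = 4 (w G''(w) + G'(w)) = 4 (w G'(w))'`. Here
`w G'(w) = (q - 1)/2 + q w^q / (R^{2q} - w^q)`, whose derivative is `q² R^{2q} w^{q-1} / (R^{2q} - w^q)²`,
and four times this is exactly `λ²`.
-/

open Real Filter Topology

theorem deriv_deriv_comp_sq_add {G G' : ℝ → ℝ} {g'' c x : ℝ}
    (hG : ∀ᶠ w in 𝓝 (x ^ 2 + c), HasDerivAt G (G' w) w) (hG' : HasDerivAt G' g'' (x ^ 2 + c)) :
    deriv (deriv fun t => G (t ^ 2 + c)) x = 4 * x ^ 2 * g'' + 2 * G' (x ^ 2 + c) := by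
  have hsq : ∀ t : ℝ, HasDerivAt (fun t => t ^ 2 + c) (2 * t) t := fun t => by
    simpa using (hasDerivAt_pow 2 t).add_const c
  have hfirst : deriv (fun t => G (t ^ 2 + c)) =ᶠ[𝓝 x] fun t => G' (t ^ 2 + c) * (2 * t) := by
    have hcont : Tendsto (fun t : ℝ => t ^ 2 + c) (𝓝 x) (𝓝 (x ^ 2 + c)) :=
      ((continuous_pow 2).add continuous_const).tendsto x
    filter_upwards [hcont.eventually hG] with t ht
    exact (ht.comp t (hsq t)).deriv
  have hsecond : HasDerivAt (fun t => G' (t ^ 2 + c) * (2 * t))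
      (g'' * (2 * x) * (2 * x) + G' (x ^ 2 + c) * 2) x := by
    have h2 : HasDerivAt (fun t : ℝ => 2 * t) 2 x := by
      simpa using (hasDerivAt_id x).const_mul 2
    exact (hG'.comp x (hsq x)).mul h2
  rw [hfirst.deriv_eq, hsecond.deriv]
  ring

theorem laplacian_comp_normSq {f : ℂ → ℝ} {G G' : ℝ → ℝ} {g'' : ℝ} {z : ℂ}
    (hf : ∀ᶠ u in 𝓝 z, f u = G (‖u‖ ^ 2))
    (hG : ∀ᶠ w in 𝓝 (‖z‖ ^ 2), HasDerivAt G (G' w) w) (hG' : HasDerivAt G' g'' (‖z‖ ^ 2)) :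
    deriv (deriv fun x : ℝ => f (x + z.im * Complex.I)) z.re +
      deriv (deriv fun y : ℝ => f (z.re + y * Complex.I)) z.im =
      4 * (‖z‖ ^ 2 * g'' + G' (‖z‖ ^ 2)) := by
  have hnorm : ∀ x y : ℝ, ‖(x : ℂ) + y * Complex.I‖ ^ 2 = x ^ 2 + y ^ 2 := fun x y => by
    rw [Complex.sq_norm, Complex.normSq_add_mul_I]
  have hz : ‖z‖ ^ 2 = z.re ^ 2 + z.im ^ 2 := by
    rw [← hnorm, Complex.re_add_im]
  have hx : (fun x : ℝ => f (x + z.im * Complex.I)) =ᶠ[𝓝 z.re]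
      fun x => G (x ^ 2 + z.im ^ 2) := by
    have hcont : Tendsto (fun x : ℝ => (x : ℂ) + z.im * Complex.I) (𝓝 z.re) (𝓝 z) := by
      have := (by fun_prop : Continuous fun x : ℝ => (x : ℂ) + z.im * Complex.I).tendsto z.re
      rwa [Complex.re_add_im] at this
    filter_upwards [hcont.eventually hf] with x hx
    rw [hx, hnorm]
  have hy : (fun y : ℝ => f (z.re + y * Complex.I)) =ᶠ[𝓝 z.im]
      fun y => G (y ^ 2 + z.re ^ 2) := by
    have hcont : Tendsto (fun y : ℝ => (z.re : ℂ) + y * Complex.I) (𝓝 z.im) (𝓝 z) := by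
      have := (by fun_prop : Continuous fun y : ℝ => (z.re : ℂ) + y * Complex.I).tendsto z.im
      rwa [Complex.re_add_im] at this
    filter_upwards [hcont.eventually hf] with y hy
    rw [hy, hnorm, add_comm]
  rw [hz] at hG hG' ⊢
  rw [hx.deriv.deriv_eq, hy.deriv.deriv_eq, deriv_deriv_comp_sq_add hG hG',
    deriv_deriv_comp_sq_add (add_comm (z.re ^ 2) _ ▸ hG) (add_comm (z.re ^ 2) _ ▸ hG'),
    add_comm (z.im ^ 2)]
  ring

section ConeMetric

variable {q R : ℝ}

noncomputable def coneDensity (q R r : ℝ) : ℝ :=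
  2 * q * R ^ q * r ^ (q - 1) / (R ^ (2 * q) - r ^ (2 * q))

noncomputable def coneLogDensity (q R w : ℝ) : ℝ :=
  log (2 * q * R ^ q) + (q - 1) / 2 * log w - log (R ^ (2 * q) - w ^ q)

noncomputable def coneLogDensityDeriv (q R w : ℝ) : ℝ :=
  (q - 1) / 2 * w⁻¹ + q * w ^ (q - 1) / (R ^ (2 * q) - w ^ q)

theorem rpow_lt_rpow_two_mul {w : ℝ} (hq : 0 < q) (hR : 0 ≤ R) (hw : 0 ≤ w) (hwR : w < R ^ 2) :
    w ^ q < R ^ (2 * q) := by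
  rw [rpow_mul hR, rpow_two]
  exact rpow_lt_rpow hw hwR hq

theorem hasDerivAt_coneLogDensity {w : ℝ} (hq : 0 < q) (hR : 0 < R) (hw : w ∈ Set.Ioo 0 (R ^ 2)) :
    HasDerivAt (coneLogDensity q R) (coneLogDensityDeriv q R w) w := by
  have hD : R ^ (2 * q) - w ^ q ≠ 0 := (sub_pos.2 (rpow_lt_rpow_two_mul hq hR.le hw.1.le hw.2)).ne'
  have hpow : HasDerivAt (fun w => w ^ q) (q * w ^ (q - 1)) w :=
    hasDerivAt_rpow_const (Or.inl hw.1.ne')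
  have := (((hasDerivAt_log hw.1.ne').const_mul ((q - 1) / 2)).const_add (log (2 * q * R ^ q))).sub
    ((hpow.const_sub (R ^ (2 * q))).log hD)
  unfold coneLogDensity coneLogDensityDeriv
  exact this.congr_deriv (by ring)

theorem hasDerivAt_coneLogDensityDeriv {w : ℝ} (hq : 0 < q) (hR : 0 < R)
    (hw : w ∈ Set.Ioo 0 (R ^ 2)) :
    HasDerivAt (coneLogDensityDeriv q R)
      ((q - 1) / 2 * -(w ^ 2)⁻¹ +
        (q * (q - 1) * w ^ (q - 2) * (R ^ (2 * q) - w ^ q) + q * w ^ (q - 1) * (q * w ^ (q - 1))) /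
          (R ^ (2 * q) - w ^ q) ^ 2) w := by
  have hD : R ^ (2 * q) - w ^ q ≠ 0 := (sub_pos.2 (rpow_lt_rpow_two_mul hq hR.le hw.1.le hw.2)).ne'
  have hpow : HasDerivAt (fun w => w ^ (q - 1)) ((q - 1) * w ^ (q - 2)) w := by
    convert hasDerivAt_rpow_const (p := q - 1) (Or.inl hw.1.ne') using 3
    ring
  have := ((hasDerivAt_inv hw.1.ne').const_mul ((q - 1) / 2)).add
    ((hpow.const_mul q).div ((hasDerivAt_rpow_const (Or.inl hw.1.ne')).const_sub (R ^ (2 * q))) hD)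
  exact this.congr_deriv (by ring)

theorem mul_deriv_add_coneLogDensityDeriv {w : ℝ} (hq : 0 < q) (hR : 0 < R)
    (hw : w ∈ Set.Ioo 0 (R ^ 2)) :
    w * ((q - 1) / 2 * -(w ^ 2)⁻¹ +
        (q * (q - 1) * w ^ (q - 2) * (R ^ (2 * q) - w ^ q) + q * w ^ (q - 1) * (q * w ^ (q - 1))) /
          (R ^ (2 * q) - w ^ q) ^ 2) + coneLogDensityDeriv q R w =
      q ^ 2 * R ^ (2 * q) * w ^ (q - 1) / (R ^ (2 * q) - w ^ q) ^ 2 := by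
  have hD : R ^ (2 * q) - w ^ q ≠ 0 := (sub_pos.2 (rpow_lt_rpow_two_mul hq hR.le hw.1.le hw.2)).ne'
  have hw0 : w ≠ 0 := hw.1.ne'
  rw [coneLogDensityDeriv, rpow_sub hw.1, rpow_sub hw.1, rpow_one, rpow_two]
  generalize R ^ (2 * q) = A at hD ⊢
  generalize w ^ q = B at hD ⊢
  field_simp
  ring

theorem log_coneDensity {r : ℝ} (hq : 0 < q) (hR : 0 < R) (hr : r ∈ Set.Ioo 0 R) :
    log (coneDensity q R r) = coneLogDensity q R (r ^ 2) := by
  have hr0 : 0 < r := hr.1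
  have hr2 : r ^ 2 < R ^ 2 := pow_lt_pow_left₀ hr.2 hr0.le two_ne_zero
  have hpow : r ^ (2 * q) = (r ^ 2) ^ q := by rw [rpow_mul hr0.le, rpow_two]
  have hD : 0 < R ^ (2 * q) - r ^ (2 * q) := by
    rw [hpow]; exact sub_pos.2 (rpow_lt_rpow_two_mul hq hR.le (by positivity) hr2)
  rw [coneDensity, coneLogDensity, log_div (by positivity) hD.ne',
    log_mul (by positivity) (by positivity), log_rpow hr0, hpow, log_pow]
  push_cast
  ring

theorem coneDensity_sq {r : ℝ} (hR : 0 ≤ R) (hr : 0 ≤ r) :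
    coneDensity q R r ^ 2 =
      4 * (q ^ 2 * R ^ (2 * q) * (r ^ 2) ^ (q - 1) / (R ^ (2 * q) - (r ^ 2) ^ q) ^ 2) := by
  have hsq : ∀ {x : ℝ} (p : ℝ), 0 ≤ x → (x ^ p) ^ 2 = (x ^ 2) ^ p := fun p hx => by
    rw [← rpow_natCast, ← rpow_mul hx, mul_comm, rpow_mul hx, rpow_natCast]
  have hR2 : (R ^ q) ^ 2 = R ^ (2 * q) := by rw [hsq q hR, rpow_mul hR, rpow_two]
  have hr2 : r ^ (2 * q) = (r ^ 2) ^ q := by rw [rpow_mul hr, rpow_two]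
  rw [coneDensity, div_pow, mul_pow, mul_pow, hR2, hsq (q - 1) hr, hr2]
  ring

end ConeMetric

/-- The conformal metric with density `λ(z) = 2qR^q|z|^{q-1}/(R^{2q}-|z|^{2q})` on
`D(R)\{0}` has constant curvature `-1`: `Δ(log λ) = λ²` away from the origin. -/
theorem stmt_11 (q R : ℝ) (hq : q ∈ Set.Ioo (0 : ℝ) 1) (hR : 0 < R)
    (lam : ℂ → ℝ)
    (hlam : ∀ z : ℂ, lam z =
      2 * q * R ^ q * (‖z‖) ^ (q - 1) / (R ^ (2 * q) - (‖z‖) ^ (2 * q)))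
    (z : ℂ) (hz : z ∈ Metric.ball (0 : ℂ) R \ {0}) :
    deriv (deriv (fun x : ℝ => Real.log (lam ((x : ℂ) + z.im * Complex.I)))) z.re +
      deriv (deriv (fun y : ℝ => Real.log (lam ((z.re : ℂ) + y * Complex.I)))) z.im =
      lam z ^ 2 := by
  have hq0 : 0 < q := hq.1
  have hnorm : ∀ u ∈ Metric.ball (0 : ℂ) R \ {0}, ‖u‖ ∈ Set.Ioo 0 R := fun u hu =>
    ⟨norm_pos_iff.2 hu.2, mem_ball_zero_iff.1 hu.1⟩
  have hnormSq : ‖z‖ ^ 2 ∈ Set.Ioo 0 (R ^ 2) :=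
    ⟨pow_pos (hnorm z hz).1 2, pow_lt_pow_left₀ (hnorm z hz).2 (norm_nonneg z) two_ne_zero⟩
  have hf : ∀ᶠ u in 𝓝 z, log (lam u) = coneLogDensity q R (‖u‖ ^ 2) := by
    filter_upwards [(Metric.isOpen_ball.sdiff isClosed_singleton).mem_nhds hz] with u hu
    rw [hlam, ← coneDensity, log_coneDensity hq0 hR (hnorm u hu)]
  have hG : ∀ᶠ w in 𝓝 (‖z‖ ^ 2), HasDerivAt (coneLogDensity q R) (coneLogDensityDeriv q R w) w :=
    eventually_of_mem (isOpen_Ioo.mem_nhds hnormSq) fun w hw => hasDerivAt_coneLogDensity hq0 hR hw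
  rw [laplacian_comp_normSq hf hG (hasDerivAt_coneLogDensityDeriv hq0 hR hnormSq),
    mul_deriv_add_coneLogDensityDeriv hq0 hR hnormSq, hlam, ← coneDensity,
    coneDensity_sq hR.le (norm_nonneg z)]
end

section
/- Let φ : Δ → ℂ be an affine (real-linear plus constant) map of a Euclidean triangle Δ with angles α ≤ β ≤ γ. Let L be the operator norm of the linear part of φ, and let l be the maximum over the three sides of Δ of the length distortion of φ restricted to that side. Then L ≤ 4 l / sin²β ≤ l π² / β². -/
/-!
Write a vector `x` in the basis `u = A - B`, `v = C - B` formed by the two sides at `B`. By Cramer's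
rule, `ω(u, v) • x = ω(x, v) • u + ω(u, x) • v` for the area form `ω`, where
`|ω(u, v)| = ‖u‖ ‖v‖ sin β` and `|ω(x, v)|, |ω(u, x)|` are at most `‖x‖` times the length of the other
vector. Hence `‖f x‖ ≤ 2 l ‖x‖ / sin β`, which is at most `4 l ‖x‖ / sin² β`. As `β` is not the
largest angle, `β ≤ π / 2`, and Jordan's inequality `sin β ≥ 2 β / π` gives the second bound.
-/

open Module EuclideanGeometry

namespace Orientation

open InnerProductGeometry

variable {E : Type*} [NormedAddCommGroup E] [InnerProductSpace ℝ E] [Fact (finrank ℝ E = 2)]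
  (o : Orientation ℝ E (Fin 2))

theorem areaForm_eq_of_orthonormalBasis (b : OrthonormalBasis (Fin 2) ℝ E)
    (hb : b.toBasis.orientation = o) (x y : E) :
    o.areaForm x y = b.repr x 0 * b.repr y 1 - b.repr x 1 * b.repr y 0 := by
  simp [areaForm_to_volumeForm, o.volumeForm_robust b hb, Basis.det_apply, Matrix.det_fin_two,
    Basis.toMatrix_apply, mul_comm]

/-- Cramer's rule in the plane. -/
theorem areaForm_smul_eq_add (u v x : E) :
    o.areaForm u v • x = o.areaForm x v • u + o.areaForm u x • v := by
  let b := o.finOrthonormalBasis two_pos Fact.out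
  have hb : b.toBasis.orientation = o := o.finOrthonormalBasis_orientation two_pos Fact.out
  apply b.repr.injective
  ext i
  fin_cases i <;>
  · simp only [map_add, map_smul, PiLp.add_apply, PiLp.smul_apply, smul_eq_mul,
      o.areaForm_eq_of_orthonormalBasis b hb, Fin.zero_eta, Fin.mk_one]
    ring

theorem abs_areaForm_eq_mul_sin_angle (u v : E) :
    |o.areaForm u v| = ‖u‖ * ‖v‖ * Real.sin (angle u v) := by
  have h := o.inner_sq_add_areaForm_sq u v
  rw [← cos_angle_mul_norm_mul_norm] at h
  have := sin_angle_nonneg u v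
  refine (sq_eq_sq₀ (abs_nonneg _) (by positivity)).1 ?_
  rw [sq_abs]
  linear_combination h - (‖u‖ * ‖v‖) ^ 2 * Real.sin_sq_add_cos_sq (angle u v)

end Orientation

open InnerProductGeometry in
theorem ContinuousLinearMap.opNorm_le_two_mul_div_sin_angle {E F : Type*} [NormedAddCommGroup E]
    [InnerProductSpace ℝ E] [NormedAddCommGroup F] [NormedSpace ℝ F] (hE : finrank ℝ E = 2)
    (f : E →L[ℝ] F) {u v : E} {l : ℝ} (hu : u ≠ 0) (hv : v ≠ 0)
    (hθ : 0 < Real.sin (angle u v)) (hfu : ‖f u‖ ≤ l * ‖u‖) (hfv : ‖f v‖ ≤ l * ‖v‖) :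
    ‖f‖ ≤ 2 * l / Real.sin (angle u v) := by
  have : Fact (finrank ℝ E = 2) := ⟨hE⟩
  have := FiniteDimensional.of_fact_finrank_eq_two (K := ℝ) (V := E)
  let o : Orientation ℝ E (Fin 2) := (finBasisOfFinrankEq ℝ E hE).orientation
  have hu' : 0 < ‖u‖ := norm_pos_iff.2 hu
  have hv' : 0 < ‖v‖ := norm_pos_iff.2 hv
  have hl : 0 ≤ l := nonneg_of_mul_nonneg_left ((norm_nonneg _).trans hfu) hu'
  refine f.opNorm_le_bound (by positivity) fun x => ?_
  have key : ‖u‖ * ‖v‖ * (Real.sin (angle u v) * ‖f x‖) ≤ ‖u‖ * ‖v‖ * (2 * l * ‖x‖) :=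
    calc ‖u‖ * ‖v‖ * (Real.sin (angle u v) * ‖f x‖) = ‖f (o.areaForm u v • x)‖ := by
          rw [map_smul, norm_smul, Real.norm_eq_abs, o.abs_areaForm_eq_mul_sin_angle]; ring
      _ = ‖o.areaForm x v • f u + o.areaForm u x • f v‖ := by
          rw [o.areaForm_smul_eq_add, map_add, map_smul, map_smul]
      _ ≤ |o.areaForm x v| * ‖f u‖ + |o.areaForm u x| * ‖f v‖ :=
          norm_add_le_of_le (norm_smul_le _ _) (norm_smul_le _ _)
      _ ≤ (‖x‖ * ‖v‖) * (l * ‖u‖) + (‖u‖ * ‖x‖) * (l * ‖v‖) := by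
          gcongr
          exacts [o.abs_areaForm_le x v, o.abs_areaForm_le u x]
      _ = ‖u‖ * ‖v‖ * (2 * l * ‖x‖) := by ring
  rw [div_mul_eq_mul_div, le_div_iff₀ hθ, mul_comm]
  exact le_of_mul_le_mul_left key (by positivity)

theorem four_div_sin_sq_le_pi_sq_div_sq {x : ℝ} (hx₀ : 0 < x) (hx : x ≤ Real.pi / 2) :
    4 / Real.sin x ^ 2 ≤ Real.pi ^ 2 / x ^ 2 := by
  have hpi := Real.pi_pos
  have hsin : 2 * x ≤ Real.pi * Real.sin x := by
    have := Real.mul_le_sin hx₀.le hx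
    rw [div_mul_eq_mul_div, div_le_iff₀ hpi] at this
    linarith
  have hsin₀ : 0 < Real.sin x := by nlinarith
  rw [div_le_div_iff₀ (by positivity) (by positivity)]
  nlinarith

theorem EuclideanGeometry.angle_le_pi_div_two_of_le_angle {V P : Type*} [NormedAddCommGroup V]
    [InnerProductSpace ℝ V] [MetricSpace P] [NormedAddTorsor V P] {A B C : P} (hAB : A ≠ B)
    (h : ∠ A B C ≤ ∠ A C B) : ∠ A B C ≤ Real.pi / 2 := by
  have hsum := angle_add_angle_add_angle_eq_pi C hAB.symm
  rw [angle_comm B C A, angle_comm C A B] at hsum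
  linarith [angle_nonneg B A C]

theorem stmt_12_general (f : EuclideanSpace ℝ (Fin 2) →L[ℝ] EuclideanSpace ℝ (Fin 2))
    (A B C : EuclideanSpace ℝ (Fin 2)) (hABC : ¬ Collinear ℝ ({A, B, C} : Set _))
    (β γ l : ℝ)
    (hβ : β = ∠ A B C) (hγ : γ = ∠ A C B)
    (hβγ : β ≤ γ)
    (hl : l = max (max (‖f (B - A)‖ / ‖B - A‖) (‖f (C - B)‖ / ‖C - B‖))
      (‖f (A - C)‖ / ‖A - C‖)) :
    ‖f‖ ≤ 4 * l / Real.sin β ^ 2 ∧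
      4 * l / Real.sin β ^ 2 ≤ l * Real.pi ^ 2 / β ^ 2 := by
  have hAB : A ≠ B := ne₁₂_of_not_collinear hABC
  have hBA : 0 < ‖B - A‖ := norm_sub_pos_iff.2 hAB.symm
  have hCB : 0 < ‖C - B‖ := norm_sub_pos_iff.2 (ne₂₃_of_not_collinear hABC).symm
  have hβ₀ : 0 < β := hβ ▸ angle_pos_of_not_collinear hABC
  have hsin : 0 < Real.sin β := hβ ▸ sin_pos_of_not_collinear hABC
  have hfu : ‖f (A - B)‖ ≤ l * ‖A - B‖ := by
    rw [← neg_sub, map_neg, norm_neg, norm_neg, ← div_le_iff₀ hBA, hl]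
    exact (le_max_left _ _).trans (le_max_left _ _)
  have hfv : ‖f (C - B)‖ ≤ l * ‖C - B‖ := by
    rw [← div_le_iff₀ hCB, hl]
    exact (le_max_right _ _).trans (le_max_left _ _)
  have hl₀ : 0 ≤ l := nonneg_of_mul_nonneg_left ((norm_nonneg _).trans hfv) hCB
  have hβ' : β = InnerProductGeometry.angle (A - B) (C - B) := hβ
  have hnorm : ‖f‖ ≤ 2 * l / Real.sin β := hβ' ▸ f.opNorm_le_two_mul_div_sin_angle
    finrank_euclideanSpace_fin (sub_ne_zero.2 hAB) (norm_pos_iff.1 hCB) (hβ' ▸ hsin) hfu hfv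
  have hβπ : β ≤ Real.pi / 2 := hβ ▸ angle_le_pi_div_two_of_le_angle hAB (hβ ▸ hγ ▸ hβγ)
  refine ⟨hnorm.trans ?_, ?_⟩
  · calc 2 * l / Real.sin β ≤ 2 * l / Real.sin β ^ 2 := by
          gcongr
          nlinarith [Real.sin_le_one β]
      _ ≤ 4 * l / Real.sin β ^ 2 := by gcongr; norm_num
  · calc 4 * l / Real.sin β ^ 2 = l * (4 / Real.sin β ^ 2) := by ring
      _ ≤ l * (Real.pi ^ 2 / β ^ 2) :=
          mul_le_mul_of_nonneg_left (four_div_sin_sq_le_pi_sq_div_sq hβ₀ hβπ) hl₀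
      _ = l * Real.pi ^ 2 / β ^ 2 := by ring

/-- Lemma 2.5: an affine map of a Euclidean triangle with angles `α ≤ β ≤ γ` whose
restriction to each side has length distortion at most `l` has operator norm
`L ≤ 4l/sin²β ≤ lπ²/β²`. -/
theorem stmt_12 (f : EuclideanSpace ℝ (Fin 2) →L[ℝ] EuclideanSpace ℝ (Fin 2))
    (w : EuclideanSpace ℝ (Fin 2))
    (φ : EuclideanSpace ℝ (Fin 2) → EuclideanSpace ℝ (Fin 2))
    (hφ : ∀ v, φ v = f v + w)
    (A B C : EuclideanSpace ℝ (Fin 2)) (hABC : ¬ Collinear ℝ ({A, B, C} : Set _))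
    (α β γ l : ℝ)
    (hα : α = ∠ B A C) (hβ : β = ∠ A B C) (hγ : γ = ∠ A C B)
    (hαβ : α ≤ β) (hβγ : β ≤ γ)
    (hl : l = max (max (‖f (B - A)‖ / ‖B - A‖) (‖f (C - B)‖ / ‖C - B‖))
      (‖f (A - C)‖ / ‖A - C‖)) :
    ‖f‖ ≤ 4 * l / Real.sin β ^ 2 ∧
      4 * l / Real.sin β ^ 2 ≤ l * Real.pi ^ 2 / β ^ 2 :=
  stmt_12_general f A B C hABC β γ l hβ hγ hβγ hl
end

section
/- Fix R ∈ (0, π/2) and φ ∈ (0, π/2), and define γ(t) = ∫_{t-φ}^{t+φ} μ(τ) dτ where μ(τ) = cos R / (cos²τ + cos²R sin²τ), for t ∈ (φ, π - φ). Then γ attains its maximum at t = π/2. -/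
open Real

/-! By the fundamental theorem of calculus `γ' t = μ (t + φ) - μ (t - φ)`. The denominator of `μ`
equals `cos² R + sin² R · cos² τ`, and `cos² (t - φ) - cos² (t + φ) = sin 2t · sin 2φ`, so `γ'` has
the sign of `sin 2t`: `γ` increases on `[φ, π/2]` and decreases on `[π/2, π - φ]`. -/

section SlidingIntegral

variable {E : Type*} [NormedAddCommGroup E] [NormedSpace ℝ E] [CompleteSpace E]

theorem hasDerivAt_intervalIntegral_sub_add {f : ℝ → E} (hf : Continuous f) (φ t : ℝ) :
    HasDerivAt (fun t ↦ ∫ τ in (t - φ)..(t + φ), f τ) (f (t + φ) - f (t - φ)) t := by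
  have hF : ∀ x, HasDerivAt (fun u ↦ ∫ τ in (0 : ℝ)..u, f τ) (f x) x :=
    fun x ↦ (hf.integral_hasStrictDerivAt 0 x).hasDerivAt
  have hsub := ((hF (t + φ)).comp_add_const t φ).sub ((hF (t - φ)).comp_sub_const t φ)
  refine hsub.congr_of_eventuallyEq (Filter.Eventually.of_forall fun s ↦ ?_)
  exact (intervalIntegral.integral_interval_sub_left
    (hf.intervalIntegrable _ _) (hf.intervalIntegrable _ _)).symm

end SlidingIntegral

theorem monotoneOn_intervalIntegral_sub_add {f : ℝ → ℝ} (hf : Continuous f) {φ : ℝ}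
    {s : Set ℝ} (hs : Convex ℝ s) (h : ∀ t ∈ interior s, f (t - φ) ≤ f (t + φ)) :
    MonotoneOn (fun t ↦ ∫ τ in (t - φ)..(t + φ), f τ) s :=
  monotoneOn_of_hasDerivWithinAt_nonneg hs
    (fun t _ ↦ (hasDerivAt_intervalIntegral_sub_add hf φ t).continuousAt.continuousWithinAt)
    (fun t _ ↦ (hasDerivAt_intervalIntegral_sub_add hf φ t).hasDerivWithinAt)
    (fun t ht ↦ sub_nonneg.mpr (h t ht))

theorem antitoneOn_intervalIntegral_sub_add {f : ℝ → ℝ} (hf : Continuous f) {φ : ℝ}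
    {s : Set ℝ} (hs : Convex ℝ s) (h : ∀ t ∈ interior s, f (t + φ) ≤ f (t - φ)) :
    AntitoneOn (fun t ↦ ∫ τ in (t - φ)..(t + φ), f τ) s :=
  antitoneOn_of_hasDerivWithinAt_nonpos hs
    (fun t _ ↦ (hasDerivAt_intervalIntegral_sub_add hf φ t).continuousAt.continuousWithinAt)
    (fun t _ ↦ (hasDerivAt_intervalIntegral_sub_add hf φ t).hasDerivWithinAt)
    (fun t ht ↦ sub_nonpos.mpr (h t ht))

theorem cos_sub_sq_sub_cos_add_sq (a b : ℝ) :
    cos (a - b) ^ 2 - cos (a + b) ^ 2 = sin (2 * a) * sin (2 * b) := by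
  rw [cos_sub, cos_add, sin_two_mul, sin_two_mul]
  ring

/-- The integrand `μ` of the statement, with `c = cos R`. -/
noncomputable def angleDensity (c τ : ℝ) : ℝ :=
  c / (cos τ ^ 2 + c ^ 2 * sin τ ^ 2)

namespace angleDensity

variable {c : ℝ}

theorem denom_pos (hc : c ≠ 0) (τ : ℝ) : 0 < cos τ ^ 2 + c ^ 2 * sin τ ^ 2 := by
  have hc2 : 0 < c ^ 2 := by positivity
  nlinarith [sin_sq_add_cos_sq τ, sq_nonneg (cos τ), sq_nonneg (sin τ),
    mul_nonneg hc2.le (sq_nonneg (cos τ)), mul_nonneg (mul_nonneg hc2.le hc2.le) (sq_nonneg (sin τ))]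

theorem continuous (hc : c ≠ 0) : Continuous (angleDensity c) :=
  continuous_const.div (by fun_prop) fun τ ↦ (denom_pos hc τ).ne'

theorem sub_le_add (hc₀ : 0 < c) (hc₁ : c ≤ 1) {a b : ℝ} (h : 0 ≤ sin (2 * a) * sin (2 * b)) :
    angleDensity c (a - b) ≤ angleDensity c (a + b) := by
  refine div_le_div_of_nonneg_left hc₀.le (denom_pos hc₀.ne' _) ?_
  have hcos := cos_sub_sq_sub_cos_add_sq a b
  nlinarith [sin_sq_add_cos_sq (a + b), sin_sq_add_cos_sq (a - b),
    mul_nonneg (sub_nonneg.mpr (pow_le_one₀ hc₀.le hc₁ : c ^ 2 ≤ 1)) h]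

theorem add_le_sub (hc₀ : 0 < c) (hc₁ : c ≤ 1) {a b : ℝ} (h : sin (2 * a) * sin (2 * b) ≤ 0) :
    angleDensity c (a + b) ≤ angleDensity c (a - b) := by
  simpa [sub_eq_add_neg] using
    sub_le_add hc₀ hc₁ (b := -b) (by rw [mul_neg, sin_neg, mul_neg]; linarith)

end angleDensity

/-- Lemma 3.1 analytically: the sliding integral
`γ(t) = ∫_{t-φ}^{t+φ} cos R/(cos²τ + cos²R sin²τ) dτ` on `(φ, π-φ)`
attains its maximum at `t = π/2`. -/
theorem stmt_13 (R φ : ℝ) (hR : R ∈ Set.Ioo 0 (Real.pi / 2))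
    (hφ : φ ∈ Set.Ioo 0 (Real.pi / 2))
    (γ : ℝ → ℝ)
    (hγ : ∀ t, γ t = ∫ τ in (t - φ)..(t + φ),
        Real.cos R / (Real.cos τ ^ 2 + Real.cos R ^ 2 * Real.sin τ ^ 2)) :
    ∀ t ∈ Set.Ioo φ (Real.pi - φ), γ t ≤ γ (Real.pi / 2) := by
  obtain ⟨hR₀, hR₁⟩ := hR
  obtain ⟨hφ₀, hφ₁⟩ := hφ
  have hc₀ : 0 < cos R := cos_pos_of_mem_Ioo ⟨by linarith, hR₁⟩
  have hγ' : γ = fun t ↦ ∫ τ in (t - φ)..(t + φ), angleDensity (cos R) τ := funext hγ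
  have hsinφ : 0 ≤ sin (2 * φ) := sin_nonneg_of_nonneg_of_le_pi (by linarith) (by linarith)
  have hmono : MonotoneOn γ (Set.Icc φ (π / 2)) := by
    rw [hγ']
    refine monotoneOn_intervalIntegral_sub_add (angleDensity.continuous hc₀.ne')
      (convex_Icc _ _) fun t ht ↦ angleDensity.sub_le_add hc₀ (cos_le_one R) ?_
    rw [interior_Icc] at ht
    exact mul_nonneg (sin_nonneg_of_nonneg_of_le_pi (by linarith [ht.1]) (by linarith [ht.2]))
      hsinφ
  have hanti : AntitoneOn γ (Set.Icc (π / 2) (π - φ)) := by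
    rw [hγ']
    refine antitoneOn_intervalIntegral_sub_add (angleDensity.continuous hc₀.ne')
      (convex_Icc _ _) fun t ht ↦ angleDensity.add_le_sub hc₀ (cos_le_one R) ?_
    rw [interior_Icc] at ht
    have hsint : sin (2 * t) ≤ 0 := by
      rw [← sin_sub_two_pi]
      exact sin_nonpos_of_nonpos_of_neg_pi_le (by linarith [ht.2]) (by linarith [ht.1])
    exact mul_nonpos_of_nonpos_of_nonneg hsint hsinφ
  intro t ⟨ht₁, ht₂⟩
  rcases le_total t (π / 2) with h | h
  · exact hmono ⟨ht₁.le, h⟩ ⟨by linarith, le_rfl⟩ h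
  · exact hanti ⟨le_rfl, by linarith⟩ ⟨h, ht₂.le⟩ h
end

section
/- For all α, β ∈ (0, π/2] with α ≤ β, the quantity (sin α + sin β - sin(α+β)) / (2√(sin α sin β)) is nonnegative and bounded above by C(α+β)² for an absolute constant C (in fact it equals (cos(α/2) sin^{3/2}(β/2) sin^{1/2}(α/2) + cos(β/2) sin^{3/2}(α/2) sin^{1/2}(β/2)) / √(cos(α/2) cos(β/2))). -/
open Real in
private lemma stmt_19_key (a b : ℝ) :
    Real.sin (2*a) + Real.sin (2*b) - Real.sin (2*a + 2*b)
      = 4 * Real.sin a * Real.sin b * Real.sin (a + b) := by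
  rw [Real.sin_two_mul, Real.sin_two_mul, show 2*a+2*b = 2*(a+b) by ring,
    Real.sin_two_mul, Real.sin_add, Real.cos_add]
  linear_combination ((-2)*Real.sin a*Real.cos a) * Real.sin_sq_add_cos_sq b +
    ((-2)*Real.sin b*Real.cos b) * Real.sin_sq_add_cos_sq a

set_option maxHeartbeats 1000000 in
/-- Case 3 of Lemma 5.3: the quantity `(sin α + sin β - sin(α+β))/(2√(sin α sin β))` is
nonnegative, is `O((α+β)²)` with an absolute constant, and has the stated closed form. -/
theorem stmt_19 : ∃ C : ℝ, 0 < C ∧ ∀ α β : ℝ,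
    α ∈ Set.Ioc 0 (Real.pi / 2) → β ∈ Set.Ioc 0 (Real.pi / 2) → α ≤ β →
    0 ≤ (Real.sin α + Real.sin β - Real.sin (α + β)) /
        (2 * Real.sqrt (Real.sin α * Real.sin β)) ∧
    (Real.sin α + Real.sin β - Real.sin (α + β)) /
        (2 * Real.sqrt (Real.sin α * Real.sin β)) ≤ C * (α + β) ^ 2 ∧
    (Real.sin α + Real.sin β - Real.sin (α + β)) /
        (2 * Real.sqrt (Real.sin α * Real.sin β)) =
      (Real.cos (α / 2) * Real.sin (β / 2) ^ ((3 : ℝ) / 2) * Real.sin (α / 2) ^ ((1 : ℝ) / 2)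
        + Real.cos (β / 2) * Real.sin (α / 2) ^ ((3 : ℝ) / 2) *
          Real.sin (β / 2) ^ ((1 : ℝ) / 2)) /
        Real.sqrt (Real.cos (α / 2) * Real.cos (β / 2)) := by
  refine ⟨1, one_pos, fun α β hα hβ hab => ?_⟩
  obtain ⟨hα0, hα2⟩ := hα
  obtain ⟨hβ0, hβ2⟩ := hβ
  have hpi := Real.pi_pos
  have ha0 : 0 < α / 2 := by linarith
  have hb0 : 0 < β / 2 := by linarith
  have ha4 : α / 2 ≤ Real.pi / 4 := by linarith
  have hb4 : β / 2 ≤ Real.pi / 4 := by linarith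
  set sa := Real.sin (α / 2) with hsadef
  set sb := Real.sin (β / 2) with hsbdef
  set ca := Real.cos (α / 2) with hcadef
  set cb := Real.cos (β / 2) with hcbdef
  have hsa : 0 < sa := Real.sin_pos_of_pos_of_lt_pi ha0 (by linarith)
  have hsb : 0 < sb := Real.sin_pos_of_pos_of_lt_pi hb0 (by linarith)
  have hca : 0 < ca := Real.cos_pos_of_mem_Ioo ⟨by linarith, by linarith⟩
  have hcb : 0 < cb := Real.cos_pos_of_mem_Ioo ⟨by linarith, by linarith⟩
  have hsqrt2 : (1:ℝ) ≤ Real.sqrt 2 := by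
    rw [show (1:ℝ) = Real.sqrt 1 by simp]
    exact Real.sqrt_le_sqrt (by norm_num)
  have hca2 : (1:ℝ)/2 ≤ ca := by
    have h := Real.cos_le_cos_of_nonneg_of_le_pi ha0.le (by linarith) ha4
    rw [Real.cos_pi_div_four] at h
    linarith
  have hcb2 : (1:ℝ)/2 ≤ cb := by
    have h := Real.cos_le_cos_of_nonneg_of_le_pi hb0.le (by linarith) hb4
    rw [Real.cos_pi_div_four] at h
    linarith
  set S := Real.sin (α / 2 + β / 2) with hSdef
  have hS : 0 < S := Real.sin_pos_of_pos_of_lt_pi (by linarith) (by linarith)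
  have key : Real.sin α + Real.sin β - Real.sin (α + β) = 4 * sa * sb * S := by
    have := stmt_19_key (α/2) (β/2)
    rw [show 2*(α/2) = α by ring, show 2*(β/2) = β by ring] at this
    exact this
  have e1 : Real.sin α = 2 * sa * ca := by
    rw [hsadef, hcadef, ← Real.sin_two_mul]; ring_nf
  have e2 : Real.sin β = 2 * sb * cb := by
    rw [hsbdef, hcbdef, ← Real.sin_two_mul]; ring_nf
  have hP : 0 < sa * sb := mul_pos hsa hsb
  have hQ : 0 < ca * cb := mul_pos hca hcb
  have hsqrtQ : 0 < Real.sqrt (ca * cb) := Real.sqrt_pos.mpr hQ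
  have hsqrtP : 0 < Real.sqrt (sa * sb) := Real.sqrt_pos.mpr hP
  have hprod : Real.sin α * Real.sin β = 4 * ((sa * sb) * (ca * cb)) := by
    rw [e1, e2]; ring
  have hsqrt : Real.sqrt (Real.sin α * Real.sin β)
      = 2 * (Real.sqrt (sa * sb) * Real.sqrt (ca * cb)) := by
    rw [hprod, Real.sqrt_mul (by norm_num : (0:ℝ) ≤ 4), Real.sqrt_mul hP.le,
      show Real.sqrt 4 = 2 by
        rw [show (4:ℝ) = 2^2 by norm_num, Real.sqrt_sq (by norm_num : (0:ℝ) ≤ 2)]]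
  have main : (Real.sin α + Real.sin β - Real.sin (α + β)) /
      (2 * Real.sqrt (Real.sin α * Real.sin β))
      = S * Real.sqrt (sa * sb) / Real.sqrt (ca * cb) := by
    rw [key, hsqrt]
    have hPsq : Real.sqrt (sa * sb) * Real.sqrt (sa * sb) = sa * sb :=
      Real.mul_self_sqrt hP.le
    rw [div_eq_div_iff (by positivity) hsqrtQ.ne']
    linear_combination (-4*S*Real.sqrt (ca*cb)) * hPsq
  have hr3b : sb ^ ((3:ℝ)/2) = sb * Real.sqrt sb := by
    rw [show (3:ℝ)/2 = 1 + 1/2 by norm_num, Real.rpow_add hsb, Real.rpow_one,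
      ← Real.sqrt_eq_rpow]
  have hr3a : sa ^ ((3:ℝ)/2) = sa * Real.sqrt sa := by
    rw [show (3:ℝ)/2 = 1 + 1/2 by norm_num, Real.rpow_add hsa, Real.rpow_one,
      ← Real.sqrt_eq_rpow]
  have hr1a : sa ^ ((1:ℝ)/2) = Real.sqrt sa := (Real.sqrt_eq_rpow sa).symm
  have hr1b : sb ^ ((1:ℝ)/2) = Real.sqrt sb := (Real.sqrt_eq_rpow sb).symm
  have closed : (ca * sb ^ ((3:ℝ)/2) * sa ^ ((1:ℝ)/2)
        + cb * sa ^ ((3:ℝ)/2) * sb ^ ((1:ℝ)/2)) / Real.sqrt (ca * cb)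
      = S * Real.sqrt (sa * sb) / Real.sqrt (ca * cb) := by
    congr 1
    rw [hr3a, hr3b, hr1a, hr1b, hSdef, Real.sin_add, Real.sqrt_mul hsa.le]
    ring
  have habound : sa < α / 2 := Real.sin_lt ha0
  have hbbound : sb < β / 2 := Real.sin_lt hb0
  have hSbound : S ≤ α / 2 + β / 2 := (Real.sin_lt (by linarith)).le
  have hPbound : Real.sqrt (sa * sb) ≤ α / 2 + β / 2 := by
    have h1 : sa * sb ≤ (α / 2 + β / 2)^2 := by nlinarith
    calc Real.sqrt (sa * sb) ≤ Real.sqrt ((α / 2 + β / 2)^2) := Real.sqrt_le_sqrt h1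
      _ = α / 2 + β / 2 := Real.sqrt_sq (by linarith)
  have hQbound : (1:ℝ)/2 ≤ Real.sqrt (ca * cb) := by
    have h1 : (1:ℝ)/4 ≤ ca * cb := by nlinarith
    calc (1:ℝ)/2 = Real.sqrt (1/4) := by
          rw [show (1/4:ℝ) = (1/2)^2 by norm_num, Real.sqrt_sq (by norm_num : (0:ℝ) ≤ 1/2)]
      _ ≤ Real.sqrt (ca * cb) := Real.sqrt_le_sqrt h1
  refine ⟨?_, ?_, ?_⟩
  · rw [main]
    positivity
  · rw [main, div_le_iff₀ hsqrtQ]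
    have h2 : S * Real.sqrt (sa * sb) ≤ (α / 2 + β / 2) * (α / 2 + β / 2) :=
      mul_le_mul hSbound hPbound (Real.sqrt_nonneg _) (by linarith)
    have h4 : (0:ℝ) ≤ (α + β)^2 * (Real.sqrt (ca * cb) - 1/2) :=
      mul_nonneg (sq_nonneg _) (by linarith)
    nlinarith [h2, h4]
  · rw [main, closed]
end
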